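/- For each μ with Re μ > -1/2, the one-dimensional subspace of H² spanned by (1-z)^μ is invariant under C*, with C*(1-z)^μ = (1/(μ+1))(1-z)^μ. -/
import Mathlib
set_option maxHeartbeats 800000


open Complex Metric

/-- The adjoint Cesàro operator, via
`(C*f)(z) = (1/(1-z)) ∫_z^1 f(ξ) dξ = ∫₀¹ f(z + t(1-z)) dt`. -/
noncomputable def cesaroStar (f : ℂ → ℂ) (z : ℂ) : ℂ :=
  ∫ t in (0:ℝ)..1, f (z + (t : ℂ) * (1 - z))

lemma ofReal_mul_cpow_aux {r : ℝ} (hr : 0 ≤ r) {w : ℂ} (hw : w ≠ 0) (μ : ℂ) :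
    ((r : ℂ) * w) ^ μ = (r : ℂ) ^ μ * w ^ μ := by
  rcases eq_or_ne μ 0 with rfl | hμ
  · simp
  rcases eq_or_lt_of_le hr with rfl | hr'
  · simp [zero_cpow hμ]
  have hr'' : (r : ℂ) ≠ 0 := ofReal_ne_zero.mpr hr'.ne'
  rw [cpow_def_of_ne_zero (mul_ne_zero hr'' hw), log_ofReal_mul hr' hw, ofReal_log hr,
    add_mul, exp_add, ← cpow_def_of_ne_zero hr'', ← cpow_def_of_ne_zero hw]

/-- For `Re μ > -1/2`, the one-dimensional span of `(1-z)^μ` is invariant under `C*`,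
with `C* (1-z)^μ = (1/(μ+1)) (1-z)^μ`. -/
theorem cesaroStar_eigen_one_dim (μ : ℂ) (hμ : -(1/2 : ℝ) < μ.re) :
    (∀ z ∈ ball (0 : ℂ) 1,
      cesaroStar (fun ξ => (1 - ξ) ^ μ) z = 1 / (μ + 1) * (1 - z) ^ μ) ∧
    ∀ f ∈ Submodule.span ℂ ({fun ξ : ℂ => (1 - ξ) ^ μ} : Set (ℂ → ℂ)),
      ∃ g ∈ Submodule.span ℂ ({fun ξ : ℂ => (1 - ξ) ^ μ} : Set (ℂ → ℂ)),
        ∀ z ∈ ball (0 : ℂ) 1, cesaroStar f z = g z := by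
  have hμ1 : μ + 1 ≠ 0 := by
    intro h
    have : (μ + 1).re = 0 := by rw [h]; simp
    simp only [add_re, one_re] at this
    linarith
  have key : ∀ z ∈ ball (0 : ℂ) 1,
      cesaroStar (fun ξ => (1 - ξ) ^ μ) z = 1 / (μ + 1) * (1 - z) ^ μ := by
    intro z hz
    have hz1 : (1 : ℂ) - z ≠ 0 := by
      intro h
      have : z = 1 := by linear_combination -h
      subst this
      simp at hz
    have step : cesaroStar (fun ξ => (1 - ξ) ^ μ) z
        = ∫ t in (0:ℝ)..1, ((1 - (t:ℝ) : ℝ) : ℂ) ^ μ * (1 - z) ^ μ := by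
      unfold cesaroStar
      apply intervalIntegral.integral_congr
      intro t ht
      rw [Set.uIcc_of_le (by norm_num : (0:ℝ) ≤ 1)] at ht
      have h1t : (0:ℝ) ≤ 1 - t := by linarith [ht.2]
      have : (1 : ℂ) - (z + (t : ℂ) * (1 - z)) = ((1 - t : ℝ) : ℂ) * (1 - z) := by
        push_cast; ring
      simp only [this]
      exact ofReal_mul_cpow_aux h1t hz1 μ
    rw [step, intervalIntegral.integral_mul_const]
    congr 1
    have h := intervalIntegral.integral_comp_sub_left (a := (0:ℝ)) (b := 1)
      (fun x : ℝ => ((x:ℝ):ℂ) ^ μ) 1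
    norm_num at h
    push_cast
    rw [h]
    rw [integral_cpow (Or.inl (by simpa using lt_trans (by norm_num) hμ))]
    simp [zero_cpow hμ1]
  refine ⟨key, ?_⟩
  intro f hf
  rw [Submodule.mem_span_singleton] at hf
  obtain ⟨c, rfl⟩ := hf
  refine ⟨(c / (μ + 1)) • fun ξ : ℂ => (1 - ξ) ^ μ,
    Submodule.smul_mem _ _ (Submodule.subset_span rfl), ?_⟩
  intro z hz
  have : cesaroStar (c • fun ξ : ℂ => (1 - ξ) ^ μ) z
      = c * cesaroStar (fun ξ : ℂ => (1 - ξ) ^ μ) z := by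
    unfold cesaroStar
    simp only [Pi.smul_apply, smul_eq_mul]
    rw [← intervalIntegral.integral_const_mul]
  rw [this, key z hz]
  simp only [Pi.smul_apply, smul_eq_mul]
  ring
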